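/- (Corollary 2, discriminator part.) Let E : 𝒳 → ℱ be an extractor satisfying H(Y|E(X)) = H(Y|X) and H(Z|(E(X),π_E(X))) = H(Z|π_E(X)), and let Φ(x) = (E(x), π_E(x)). Then the optimal discriminator's output equals the posterior of Z given the true label posterior: for every x ∈ 𝒳 and z ∈ 𝒵, Pr[Φ=Φ(x), Z=z] / Pr[Φ=Φ(x)] = Pr[π=π(x), Z=z] / Pr[π=π(x)], where π : 𝒳 → (𝒴 → ℝ) is the posterior map π(x)(y) = q_{XY}(x,y)/q_X(x). -/

import Mathlib

open scoped BigOperators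

/-- Marginal of a joint pmf on the first coordinate: `q_X(x) = ∑ w q(x,w)`. -/
noncomputable def margX {X W : Type*} [Fintype W] (q : X × W → ℝ) (x : X) : ℝ :=
  ∑ w, q (x, w)

open Classical in
/-- `Pr[f = a, W = w] = ∑_{x : f x = a} q(x,w)`. -/
noncomputable def jointPr {X W A : Type*} [Fintype X] (q : X × W → ℝ)
    (f : X → A) (a : A) (w : W) : ℝ :=
  ∑ x ∈ Finset.univ.filter (fun x => f x = a), q (x, w)

open Classical in
/-- `Pr[f = a] = ∑_{x : f x = a} q_X(x)`. -/
noncomputable def featPr {X W A : Type*} [Fintype X] [Fintype W] (q : X × W → ℝ)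
    (f : X → A) (a : A) : ℝ :=
  ∑ x ∈ Finset.univ.filter (fun x => f x = a), margX q x

open Classical in
/-- Conditional entropy `H(W | f(X))`, natural logarithm, with the convention that
summands with `Pr[f=a, W=w] = 0` contribute `0` (automatic since `-0 * log _ = 0`). -/
noncomputable def condEnt {X W A : Type*} [Fintype X] [Fintype W] (q : X × W → ℝ)
    (f : X → A) : ℝ :=
  ∑ a ∈ Finset.univ.image f, ∑ w,
    -(jointPr q f a w) * Real.log (jointPr q f a w / featPr q f a)

/-- `-log t` valued in `(-∞, ∞]`, with the convention `-log 0 = +∞`. -/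
noncomputable def negLog (t : ℝ) : EReal := if t = 0 then ⊤ else ((-(Real.log t) : ℝ) : EReal)

/-- Cross-entropy loss `∑_{x,w} q(x,w) · (-log P(Φ(x))(w))`, valued in `(-∞, ∞]`. -/
noncomputable def condLoss {X W G : Type*} [Fintype X] [Fintype W] (q : X × W → ℝ)
    (Φ : X → G) (P : G → W → ℝ) : EReal :=
  ∑ x, ∑ w, (q (x, w) : EReal) * negLog (P (Φ x) w)

/-- A conditional probability mass function on labels `W` with feature space `G`. -/
def IsCondPMF {G W : Type*} [Fintype W] (P : G → W → ℝ) : Prop :=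
  (∀ g w, 0 ≤ P g w) ∧ ∀ g, ∑ w, P g w = 1

open Classical in
/-- The posterior predictor: `Pr[Φ=g, W=w]/Pr[Φ=g]` on features of positive probability
in the image of `Φ`, and the uniform distribution on `W` otherwise. -/
noncomputable def posteriorPred {X W G : Type*} [Fintype X] [Fintype W] (q : X × W → ℝ)
    (Φ : X → G) (g : G) (w : W) : ℝ :=
  if g ∈ Set.range Φ ∧ 0 < featPr q Φ g then jointPr q Φ g w / featPr q Φ g
  else 1 / Fintype.card W

/-- The posterior map `π(x)(w) = q(x,w)/q_X(x)`. -/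
noncomputable def postMap {X W : Type*} [Fintype W] (q : X × W → ℝ) (x : X) : W → ℝ :=
  fun w => q (x, w) / margX q x

/-- Two-variable marginal `q_{XY}` of a pmf on `X × Y × Z × V`. -/
noncomputable def qXY {X Y Z V : Type*} [Fintype Z] [Fintype V]
    (q : X × Y × Z × V → ℝ) : X × Y → ℝ :=
  fun p => ∑ z, ∑ v, q (p.1, p.2, z, v)

/-- Two-variable marginal `q_{XZ}` of a pmf on `X × Y × Z × V`. -/
noncomputable def qXZ {X Y Z V : Type*} [Fintype Y] [Fintype V]
    (q : X × Y × Z × V → ℝ) : X × Z → ℝ :=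
  fun p => ∑ y, ∑ v, q (p.1, y, p.2, v)

/-- Two-variable marginal `q_{XV}` of a pmf on `X × Y × Z × V`. -/
noncomputable def qXV {X Y Z V : Type*} [Fintype Y] [Fintype Z]
    (q : X × Y × Z × V → ℝ) : X × V → ℝ :=
  fun p => ∑ y, ∑ z, q (p.1, y, z, p.2)

/-- The posterior feature of an extractor `E`:
`π_E(x)(y) = Pr[E = E(x), Y = y] / Pr[E = E(x)]`. -/
noncomputable def postFeat {X Y F : Type*} [Fintype X] [Fintype Y] (qxy : X × Y → ℝ)
    (E : X → F) (x : X) : Y → ℝ :=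
  fun y => jointPr qxy E (E x) y / featPr qxy E (E x)

/-- The virtual value function
`𝒱(E) = H(Y|E(X)) - α·H(Z|(E(X),π_E(X))) - β·H(V|(E(X),π_E(X)))`. -/
noncomputable def virtVal {X Y Z V F : Type*}
    [Fintype X] [Fintype Y] [Fintype Z] [Fintype V]
    (α β : ℝ) (q : X × Y × Z × V → ℝ) (E : X → F) : ℝ :=
  condEnt (qXY q) E
    - α * condEnt (qXZ q) (fun x => (E x, postFeat (qXY q) E x))
    - β * condEnt (qXV q) (fun x => (E x, postFeat (qXY q) E x))

/-!
Conditioning on a coarsening `g ∘ f` of a feature `f` can only raise the conditional entropy: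
on each fibre of `g` this is the log-sum inequality, i.e. Jensen's inequality for `t ↦ t log t`
with weights `Pr[f = a] / Pr[g ∘ f = b]`. By strict convexity, equality of the two entropies
forces the posterior of the label given `f` to equal the posterior given `g ∘ f`. With `f = id`,
`g = E` the first hypothesis gives `π_E = π`; with `f = (E, π)`, `g = Prod.snd` the second one
then gives the claimed identity of the discriminator outputs.
-/

section LogSum

variable {ι : Type*} (s : Finset ι) (n c : ι → ℝ)

open Real in
lemma sum_mul_log_div_eq_mul_sum_smul (h0 : ∀ i ∈ s, c i = 0 → n i = 0)
    (hC : ∑ i ∈ s, c i ≠ 0) :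
    ∑ i ∈ s, n i * log (n i / c i)
      = (∑ i ∈ s, c i) * ∑ i ∈ s, (c i / ∑ j ∈ s, c j) • (n i / c i * log (n i / c i)) := by
  rw [Finset.mul_sum]
  refine Finset.sum_congr rfl fun i hi => ?_
  rcases eq_or_ne (c i) 0 with hci | hci
  · simp [hci, h0 i hi hci]
  · simp only [smul_eq_mul]
    field_simp

lemma sum_smul_div_eq_div (h0 : ∀ i ∈ s, c i = 0 → n i = 0) :
    ∑ i ∈ s, (c i / ∑ j ∈ s, c j) • (n i / c i) = (∑ i ∈ s, n i) / ∑ i ∈ s, c i := by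
  rw [Finset.sum_div]
  refine Finset.sum_congr rfl fun i hi => ?_
  rcases eq_or_ne (c i) 0 with hci | hci
  · simp [hci, h0 i hi hci]
  · simp only [smul_eq_mul]
    field_simp

variable {s n c}

open Real in
theorem mul_log_div_le_sum_mul_log_div (hn : ∀ i ∈ s, 0 ≤ n i) (hc : ∀ i ∈ s, 0 ≤ c i)
    (h0 : ∀ i ∈ s, c i = 0 → n i = 0) :
    (∑ i ∈ s, n i) * log ((∑ i ∈ s, n i) / ∑ i ∈ s, c i) ≤ ∑ i ∈ s, n i * log (n i / c i) := by
  rcases (Finset.sum_nonneg hc).eq_or_lt with hC | hC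
  · have hn0 : ∀ i ∈ s, n i = 0 := fun i hi =>
      h0 i hi ((Finset.sum_eq_zero_iff_of_nonneg hc).1 hC.symm i hi)
    rw [Finset.sum_eq_zero hn0, zero_mul]
    exact (Finset.sum_eq_zero fun i hi => by rw [hn0 i hi, zero_mul]).ge
  have jensen := convexOn_mul_log.map_sum_le (t := s) (w := fun i => c i / ∑ j ∈ s, c j)
    (p := fun i => n i / c i) (fun i hi => div_nonneg (hc i hi) hC.le)
    (by rw [← Finset.sum_div, div_self hC.ne'])
    (fun i hi => Set.mem_Ici.2 (div_nonneg (hn i hi) (hc i hi)))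
  rw [sum_smul_div_eq_div s n c h0] at jensen
  rw [sum_mul_log_div_eq_mul_sum_smul s n c h0 hC.ne']
  calc (∑ i ∈ s, n i) * log ((∑ i ∈ s, n i) / ∑ i ∈ s, c i)
      = (∑ i ∈ s, c i) * ((∑ i ∈ s, n i) / (∑ i ∈ s, c i)
          * log ((∑ i ∈ s, n i) / ∑ i ∈ s, c i)) := by field_simp
    _ ≤ _ := mul_le_mul_of_nonneg_left jensen hC.le

open Real in
theorem mul_sum_eq_sum_mul_of_sum_mul_log_div_eq (hn : ∀ i ∈ s, 0 ≤ n i) (hc : ∀ i ∈ s, 0 ≤ c i)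
    (h0 : ∀ i ∈ s, c i = 0 → n i = 0)
    (heq : ∑ i ∈ s, n i * log (n i / c i)
      = (∑ i ∈ s, n i) * log ((∑ i ∈ s, n i) / ∑ i ∈ s, c i)) :
    ∀ i ∈ s, n i * ∑ j ∈ s, c j = (∑ j ∈ s, n j) * c i := by
  intro i hi
  rcases eq_or_ne (c i) 0 with hci | hci
  · simp [hci, h0 i hi hci]
  have hC : 0 < ∑ j ∈ s, c j :=
    (Finset.single_le_sum hc hi).trans_lt' ((hc i hi).lt_of_ne' hci)
  have hjensen : (fun t => t * log t) (∑ j ∈ s, (c j / ∑ k ∈ s, c k) • (n j / c j))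
      = ∑ j ∈ s, (c j / ∑ k ∈ s, c k) • (fun t => t * log t) (n j / c j) := by
    rw [sum_mul_log_div_eq_mul_sum_smul s n c h0 hC.ne'] at heq
    rw [sum_smul_div_eq_div s n c h0]
    field_simp at heq ⊢
    linarith
  have hratio := (strictConvexOn_mul_log.map_sum_eq_iff' (t := s)
    (fun j hj => div_nonneg (hc j hj) hC.le) (by rw [← Finset.sum_div, div_self hC.ne'])
    (fun j hj => Set.mem_Ici.2 (div_nonneg (hn j hj) (hc j hj)))).1 hjensen i hi
    (div_ne_zero hci hC.ne')
  rw [sum_smul_div_eq_div s n c h0, div_eq_div_iff hci hC.ne'] at hratio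
  linarith

end LogSum

section Coarsening

variable {X W A B : Type*} [Fintype X] {q : X × W → ℝ}

lemma jointPr_nonneg (hq : ∀ p, 0 ≤ q p) (f : X → A) (a : A) (w : W) : 0 ≤ jointPr q f a w :=
  Finset.sum_nonneg fun _ _ => hq _

open Classical in
lemma sum_filter_comp_eq_sum_fiberwise (f : X → A) (g : A → B) (b : B) (h : X → ℝ) :
    ∑ x ∈ Finset.univ.filter (fun x => g (f x) = b), h x
      = ∑ a ∈ (Finset.univ.image f).filter (fun a => g a = b),
          ∑ x ∈ Finset.univ.filter (fun x => f x = a), h x := by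
  convert (Finset.sum_fiberwise_eq_sum_filter Finset.univ _ f h).symm using 2
  ext x
  simp

open Classical in
lemma jointPr_comp (q : X × W → ℝ) (f : X → A) (g : A → B) (b : B) (w : W) :
    jointPr q (g ∘ f) b w
      = ∑ a ∈ (Finset.univ.image f).filter (fun a => g a = b), jointPr q f a w :=
  sum_filter_comp_eq_sum_fiberwise f g b _

variable [Fintype W]

open Classical in
lemma featPr_comp (q : X × W → ℝ) (f : X → A) (g : A → B) (b : B) :
    featPr q (g ∘ f) b
      = ∑ a ∈ (Finset.univ.image f).filter (fun a => g a = b), featPr q f a :=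
  sum_filter_comp_eq_sum_fiberwise f g b _

noncomputable def condEntTerm (q : X × W → ℝ) (f : X → A) (a : A) (w : W) : ℝ :=
  -(jointPr q f a w) * Real.log (jointPr q f a w / featPr q f a)

open Classical in
lemma condEnt_eq_sum_condEntTerm (q : X × W → ℝ) (f : X → A) :
    condEnt q f = ∑ a ∈ Finset.univ.image f, ∑ w, condEntTerm q f a w :=
  rfl

lemma featPr_eq_sum_jointPr (q : X × W → ℝ) (f : X → A) (a : A) :
    featPr q f a = ∑ w, jointPr q f a w :=
  Finset.sum_comm

lemma featPr_nonneg (hq : ∀ p, 0 ≤ q p) (f : X → A) (a : A) : 0 ≤ featPr q f a := by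
  rw [featPr_eq_sum_jointPr]
  exact Finset.sum_nonneg fun w _ => jointPr_nonneg hq f a w

lemma jointPr_eq_zero_of_featPr_eq_zero (hq : ∀ p, 0 ≤ q p) {f : X → A} {a : A}
    (h : featPr q f a = 0) (w : W) : jointPr q f a w = 0 := by
  rw [featPr_eq_sum_jointPr] at h
  exact (Finset.sum_eq_zero_iff_of_nonneg fun w _ => jointPr_nonneg hq f a w).1 h w
    (Finset.mem_univ w)

lemma featPr_pos_of_margX_pos (hq : ∀ p, 0 ≤ q p) (f : X → A) {x : X} (hx : 0 < margX q x) :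
    0 < featPr q f (f x) :=
  hx.trans_le <| Finset.single_le_sum (f := margX q)
    (fun x' _ => Finset.sum_nonneg fun w _ => hq (x', w)) (by simp)

open Classical in
lemma condEnt_eq_sum_fiberwise (q : X × W → ℝ) (f : X → A) (g : A → B) :
    condEnt q f = ∑ b ∈ Finset.univ.image (g ∘ f), ∑ w,
      ∑ a ∈ (Finset.univ.image f).filter (fun a => g a = b), condEntTerm q f a w := by
  rw [condEnt_eq_sum_condEntTerm]
  convert (Finset.sum_fiberwise_of_maps_to (s := Finset.univ.image f) (g := g)
    (t := Finset.univ.image (g ∘ f)) (by simp) _).symm using 2 with b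
  exact Finset.sum_comm

open Classical in
lemma sum_condEntTerm_le_condEntTerm_comp (hq : ∀ p, 0 ≤ q p) (f : X → A) (g : A → B) (b : B)
    (w : W) :
    ∑ a ∈ (Finset.univ.image f).filter (fun a => g a = b), condEntTerm q f a w
      ≤ condEntTerm q (g ∘ f) b w := by
  have logSum := mul_log_div_le_sum_mul_log_div
    (s := (Finset.univ.image f).filter (fun a => g a = b)) (n := fun a => jointPr q f a w)
    (fun a _ => jointPr_nonneg hq f a w) (fun a _ => featPr_nonneg hq f a)
    (fun a _ h => jointPr_eq_zero_of_featPr_eq_zero hq h w)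
  simp only [condEntTerm, neg_mul, Finset.sum_neg_distrib, jointPr_comp, featPr_comp]
  exact neg_le_neg logSum

open Classical in
lemma sum_condEntTerm_eq_condEntTerm_comp (hq : ∀ p, 0 ≤ q p) (f : X → A) (g : A → B)
    (h : condEnt q (g ∘ f) = condEnt q f) (x : X) (w : W) :
    ∑ a ∈ (Finset.univ.image f).filter (fun a => g a = g (f x)), condEntTerm q f a w
      = condEntTerm q (g ∘ f) (g (f x)) w := by
  have hle := sum_condEntTerm_le_condEntTerm_comp hq f g
  rw [condEnt_eq_sum_fiberwise q f g, condEnt_eq_sum_condEntTerm] at h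
  have hfiber := (Finset.sum_eq_sum_iff_of_le fun b _ => Finset.sum_le_sum fun w _ => hle b w).1
    h.symm (g (f x)) (by simp)
  exact (Finset.sum_eq_sum_iff_of_le fun w _ => hle _ w).1 hfiber w (Finset.mem_univ w)

theorem postFeat_comp_eq_of_condEnt_eq (hq : ∀ p, 0 ≤ q p) (f : X → A) (g : A → B)
    (h : condEnt q (g ∘ f) = condEnt q f) {x : X} (hx : 0 < margX q x) :
    postFeat q (g ∘ f) x = postFeat q f x := by
  funext w
  have hterm := sum_condEntTerm_eq_condEntTerm_comp hq f g h x w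
  simp only [condEntTerm, neg_mul, Finset.sum_neg_distrib, neg_inj, jointPr_comp,
    featPr_comp] at hterm
  have hcross := mul_sum_eq_sum_mul_of_sum_mul_log_div_eq
    (fun a _ => jointPr_nonneg hq f a w) (fun a _ => featPr_nonneg hq f a)
    (fun a _ h => jointPr_eq_zero_of_featPr_eq_zero hq h w) hterm (f x) (by simp)
  rw [← jointPr_comp, ← featPr_comp] at hcross
  rw [postFeat, postFeat, div_eq_div_iff (featPr_pos_of_margX_pos hq (g ∘ f) hx).ne'
    (featPr_pos_of_margX_pos hq f hx).ne']
  exact hcross.symm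

open Classical in
lemma postFeat_id (q : X × W → ℝ) : postFeat q id = postMap q := by
  funext x w
  simp [postFeat, postMap, jointPr, featPr, Finset.sum_filter]

end Coarsening

section Marginals

variable {X Y Z V : Type*} {q : X × Y × Z × V → ℝ}

lemma qXY_nonneg [Fintype Z] [Fintype V] (hq : ∀ p, 0 ≤ q p) (p : X × Y) : 0 ≤ qXY q p :=
  Finset.sum_nonneg fun _ _ => Finset.sum_nonneg fun _ _ => hq _

lemma qXZ_nonneg [Fintype Y] [Fintype V] (hq : ∀ p, 0 ≤ q p) (p : X × Z) : 0 ≤ qXZ q p :=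
  Finset.sum_nonneg fun _ _ => Finset.sum_nonneg fun _ _ => hq _

lemma margX_qXZ [Fintype Y] [Fintype Z] [Fintype V] (q : X × Y × Z × V → ℝ) :
    margX (qXZ q) = margX (qXY q) :=
  funext fun _ => Finset.sum_comm

end Marginals

theorem statement12_general {X Y Z V F : Type*}
    [Fintype X] [Fintype Y]
    [Fintype Z] [Fintype V]
    (q : X × Y × Z × V → ℝ) (hq0 : ∀ p, 0 ≤ q p)
    (hqX : ∀ x, 0 < margX (qXY q) x) (E : X → F)
    (h1 : condEnt (qXY q) E = condEnt (qXY q) id)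
    (h2 : condEnt (qXZ q) (fun x => (E x, postFeat (qXY q) E x))
          = condEnt (qXZ q) (postFeat (qXY q) E)) :
    ∀ (x : X) (z : Z),
      jointPr (qXZ q) (fun x => (E x, postFeat (qXY q) E x)) (E x, postFeat (qXY q) E x) z
        / featPr (qXZ q) (fun x => (E x, postFeat (qXY q) E x)) (E x, postFeat (qXY q) E x)
      = jointPr (qXZ q) (postMap (qXY q)) (postMap (qXY q) x) z
        / featPr (qXZ q) (postMap (qXY q)) (postMap (qXY q) x) := by
  intro x z
  have hπ : postFeat (qXY q) E = postMap (qXY q) := by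
    funext x'
    rw [← postFeat_id]
    exact postFeat_comp_eq_of_condEnt_eq (qXY_nonneg hq0) id E h1 (hqX x')
  rw [hπ] at h2 ⊢
  have hx : 0 < margX (qXZ q) x := by
    rw [margX_qXZ]
    exact hqX x
  exact congrFun (postFeat_comp_eq_of_condEnt_eq (qXZ_nonneg hq0)
    (fun x => (E x, postMap (qXY q) x)) Prod.snd h2.symm hx).symm z

/-- Corollary 2, discriminator part: if `H(Y|E(X)) = H(Y|X)` and
`H(Z|(E(X),π_E(X))) = H(Z|π_E(X))`, then with `Φ(x) = (E(x), π_E(x))`, for all `x, z`,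
`Pr[Φ=Φ(x), Z=z]/Pr[Φ=Φ(x)] = Pr[π=π(x), Z=z]/Pr[π=π(x)]`, where `π` is the true
posterior map. -/
theorem statement12 {X Y Z V F : Type*}
    [Fintype X] [Nonempty X] [Fintype Y] [Nonempty Y]
    [Fintype Z] [Nonempty Z] [Fintype V] [Nonempty V]
    (q : X × Y × Z × V → ℝ) (hq0 : ∀ p, 0 ≤ q p) (hq1 : ∑ p, q p = 1)
    (hqX : ∀ x, 0 < margX (qXY q) x) (E : X → F)
    (h1 : condEnt (qXY q) E = condEnt (qXY q) id)
    (h2 : condEnt (qXZ q) (fun x => (E x, postFeat (qXY q) E x))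
          = condEnt (qXZ q) (postFeat (qXY q) E)) :
    ∀ (x : X) (z : Z),
      jointPr (qXZ q) (fun x => (E x, postFeat (qXY q) E x)) (E x, postFeat (qXY q) E x) z
        / featPr (qXZ q) (fun x => (E x, postFeat (qXY q) E x)) (E x, postFeat (qXY q) E x)
      = jointPr (qXZ q) (postMap (qXY q)) (postMap (qXY q) x) z
        / featPr (qXZ q) (postMap (qXY q)) (postMap (qXY q) x) :=
  statement12_general q hq0 hqX E h1 h2
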